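/- Let q ∈ {1,2}, T > 0, K ∈ L∞(ℝ), and let U be a family of functions X ∈ L_q(ℝ) with ‖X‖_{L_q} ≤ 1 such that ∫_{|ω|>Ω} e^{qT|ω|}|X(iω)|^q dω → 0 as Ω → ∞ uniformly over X ∈ U. Then with V_γ as above, for every δ > 0 there exists γ > 0 such that ‖V_γ·K·X − K·X‖_{L_q} ≤ δ for all X ∈ U. -/

import Mathlib

/-!
Since `Re(2Tω²/(γ + iω)) = 2Tω²γ/(γ² + ω²) ≤ T|ω|`, one has `|V_γ(iω) - 1| ≤ 2e^{T|ω|}` for every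
`γ > 0`, while the exponent is at most `2TΩ²/γ` in modulus on `|ω| ≤ Ω`, so `V_γ → 1` uniformly
there as `γ → ∞`. Splitting the integral at `|ω| = Ω`, the tail is bounded by the weighted tail of
`X` independently of `γ`, which is uniformly small on `U`; then `γ` is chosen for that `Ω`.
-/

open MeasureTheory

noncomputable def dampingMultiplier (T γ ω : ℝ) : ℂ :=
  Complex.exp (-2 * (T : ℂ) * (Complex.I * ω) ^ 2 / ((γ : ℂ) + Complex.I * ω))

section Damping

variable {T γ : ℝ}

lemma dampingExponent_eq (T γ ω : ℝ) :
    -2 * (T : ℂ) * (Complex.I * ω) ^ 2 / ((γ : ℂ) + Complex.I * ω)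
      = ((2 * T * ω ^ 2 : ℝ) : ℂ) / ((γ : ℂ) + Complex.I * ω) := by
  push_cast
  ring_nf
  rw [Complex.I_sq]
  ring

lemma le_norm_ofReal_add_I_mul (γ ω : ℝ) : γ ≤ ‖(γ : ℂ) + Complex.I * ω‖ := by
  refine (le_abs_self γ).trans ?_
  simpa using Complex.abs_re_le_norm ((γ : ℂ) + Complex.I * ω)

lemma re_dampingExponent_le (hT : 0 ≤ T) (hγ : 0 < γ) (ω : ℝ) :
    (-2 * (T : ℂ) * (Complex.I * ω) ^ 2 / ((γ : ℂ) + Complex.I * ω)).re ≤ T * |ω| := by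
  have hre : (((2 * T * ω ^ 2 : ℝ) : ℂ) / ((γ : ℂ) + Complex.I * ω)).re
      = 2 * T * ω ^ 2 * γ / (γ ^ 2 + ω ^ 2) := by
    rw [Complex.div_re, Complex.ofReal_re, Complex.ofReal_im]
    simp only [Complex.add_re, Complex.ofReal_re, Complex.mul_re, Complex.I_re, zero_mul,
      Complex.I_im, Complex.ofReal_im, mul_zero, sub_self, add_zero, Complex.normSq_apply,
      Complex.add_im, Complex.mul_im, one_mul, zero_add, zero_div]
    ring
  rw [dampingExponent_eq, hre, div_le_iff₀ (by positivity)]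
  have hamgm : 2 * γ * |ω| ≤ γ ^ 2 + ω ^ 2 := by
    nlinarith [sq_nonneg (γ - |ω|), sq_abs ω]
  calc 2 * T * ω ^ 2 * γ = T * |ω| * (2 * γ * |ω|) := by rw [← sq_abs ω]; ring
    _ ≤ T * |ω| * (γ ^ 2 + ω ^ 2) := by gcongr

lemma norm_dampingExponent_le (hT : 0 ≤ T) (hγ : 0 < γ) (ω : ℝ) :
    ‖-2 * (T : ℂ) * (Complex.I * ω) ^ 2 / ((γ : ℂ) + Complex.I * ω)‖ ≤ 2 * T * ω ^ 2 / γ := by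
  rw [dampingExponent_eq, norm_div, Complex.norm_real, Real.norm_of_nonneg (by positivity)]
  exact div_le_div_of_nonneg_left (by positivity) hγ (le_norm_ofReal_add_I_mul γ ω)

lemma continuous_dampingMultiplier (hγ : 0 < γ) : Continuous (dampingMultiplier T γ) := by
  have hden : ∀ ω : ℝ, (γ : ℂ) + Complex.I * ω ≠ 0 := fun ω h => by
    simpa [hγ.ne'] using congrArg Complex.re h
  unfold dampingMultiplier
  fun_prop (disch := exact hden)

lemma norm_dampingMultiplier_sub_one_le (hT : 0 ≤ T) (hγ : 0 < γ) (ω : ℝ) :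
    ‖dampingMultiplier T γ ω - 1‖ ≤ 2 * Real.exp (T * |ω|) := by
  have hexp : ‖dampingMultiplier T γ ω‖ ≤ Real.exp (T * |ω|) := by
    rw [dampingMultiplier, Complex.norm_exp]
    exact Real.exp_le_exp.2 (re_dampingExponent_le hT hγ ω)
  have hone : (1 : ℝ) ≤ Real.exp (T * |ω|) := Real.one_le_exp (by positivity)
  calc ‖dampingMultiplier T γ ω - 1‖ ≤ ‖dampingMultiplier T γ ω‖ + ‖(1 : ℂ)‖ := norm_sub_le _ _
    _ ≤ 2 * Real.exp (T * |ω|) := by rw [norm_one]; linarith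

lemma exists_dampingMultiplier_near_one (hT : 0 ≤ T) {ε : ℝ} (hε : 0 < ε) (Ω : ℝ) :
    ∃ γ > 0, ∀ ω, |ω| ≤ Ω → ‖dampingMultiplier T γ ω - 1‖ ≤ ε := by
  set r := min 1 (ε / 2)
  have hr : 0 < r := lt_min one_pos (half_pos hε)
  refine ⟨2 * T * Ω ^ 2 / r + 1, by positivity, fun ω hω => ?_⟩
  have hγ : 0 < 2 * T * Ω ^ 2 / r + 1 := by positivity
  have hsmall : ‖-2 * (T : ℂ) * (Complex.I * ω) ^ 2 / (((2 * T * Ω ^ 2 / r + 1 : ℝ) : ℂ)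
      + Complex.I * ω)‖ ≤ r := by
    refine (norm_dampingExponent_le hT hγ ω).trans ?_
    rw [div_le_iff₀ hγ, mul_add, mul_div_cancel₀ _ hr.ne']
    have : ω ^ 2 ≤ Ω ^ 2 := by rw [← sq_abs]; exact pow_le_pow_left₀ (abs_nonneg ω) hω 2
    nlinarith
  calc ‖dampingMultiplier T _ ω - 1‖ ≤ 2 * r :=
        (Complex.norm_exp_sub_one_le (hsmall.trans (min_le_left _ _))).trans (by linarith)
    _ ≤ ε := by linarith [min_le_right 1 (ε / 2)]

end Damping

lemma integral_le_setIntegral_add_setIntegral_compl {α : Type*} [MeasurableSpace α]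
    {μ : Measure α} {s : Set α} (hs : MeasurableSet s) {F g h : α → ℝ}
    (hFm : AEStronglyMeasurable F μ) (hF : 0 ≤ F) (hg : Integrable g μ) (hh : Integrable h μ)
    (hFg : ∀ x ∈ s, F x ≤ g x) (hFh : ∀ x ∉ s, F x ≤ h x) :
    ∫ x, F x ∂μ ≤ (∫ x in s, g x ∂μ) + ∫ x in sᶜ, h x ∂μ := by
  classical
  have hle : F ≤ s.piecewise g h := fun x => by
    by_cases hx : x ∈ s <;> simp [hx, hFg, hFh]
  have hpw : Integrable (s.piecewise g h) μ :=
    Integrable.piecewise hs hg.integrableOn hh.integrableOn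
  rw [← integral_piecewise hs hg.integrableOn hh.integrableOn]
  refine integral_mono (hpw.mono' hFm ?_) hpw hle
  exact Filter.Eventually.of_forall fun x => by rw [Real.norm_of_nonneg (hF x)]; exact hle x

lemma norm_mul_mul_sub_pow_le {𝕜 : Type*} [NormedField 𝕜] {v k : 𝕜} {c B : ℝ}
    (hv : ‖v - 1‖ ≤ c) (hk : ‖k‖ ≤ B) (x : 𝕜) (q : ℕ) :
    ‖v * k * x - k * x‖ ^ q ≤ B ^ q * (c ^ q * ‖x‖ ^ q) := by
  have hfac : v * k * x - k * x = (v - 1) * k * x := by ring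
  rw [hfac, norm_mul, norm_mul, ← mul_pow, ← mul_pow, mul_left_comm, mul_assoc]
  gcongr
  exact (norm_nonneg _).trans hv

lemma integral_norm_mul_mul_sub_pow_le {q : ℕ} {T Ω ε B : ℝ} {V K X : ℝ → ℂ} (hT : 0 ≤ T)
    (hVm : Measurable V) (hV : ∀ ω, ‖V ω - 1‖ ≤ 2 * Real.exp (T * |ω|))
    (hε : 0 ≤ ε) (hVε : ∀ ω, |ω| ≤ Ω → ‖V ω - 1‖ ≤ ε)
    (hKm : Measurable K) (hK : ∀ ω, ‖K ω‖ ≤ B) (hXm : Measurable X)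
    (hX : Integrable fun ω => Real.exp (q * T * |ω|) * ‖X ω‖ ^ q) :
    ∫ ω, ‖V ω * K ω * X ω - K ω * X ω‖ ^ q ≤
      B ^ q * (ε ^ q * (∫ ω, ‖X ω‖ ^ q) +
        2 ^ q * ∫ ω in {ω | Ω < |ω|}, Real.exp (q * T * |ω|) * ‖X ω‖ ^ q) := by
  have hB : 0 ≤ B := (norm_nonneg _).trans (hK 0)
  have hXq : Integrable fun ω => ‖X ω‖ ^ q := by
    refine hX.mono' (hXm.norm.pow_const q).aestronglyMeasurable (.of_forall fun ω => ?_)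
    rw [Real.norm_of_nonneg (by positivity)]
    exact le_mul_of_one_le_left (by positivity) (Real.one_le_exp (by positivity))
  have hs : MeasurableSet {ω : ℝ | Ω < |ω|} := measurableSet_lt measurable_const measurable_abs
  calc ∫ ω, ‖V ω * K ω * X ω - K ω * X ω‖ ^ q
      ≤ (∫ ω in {ω | Ω < |ω|}, B ^ q * (2 ^ q * (Real.exp (q * T * |ω|) * ‖X ω‖ ^ q)))
        + ∫ ω in {ω | Ω < |ω|}ᶜ, B ^ q * (ε ^ q * ‖X ω‖ ^ q) := by
        refine integral_le_setIntegral_add_setIntegral_compl hs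
          ((((hVm.mul hKm).mul hXm).sub (hKm.mul hXm)).norm.pow_const q).aestronglyMeasurable
          (fun ω => by positivity) ((hX.const_mul _).const_mul _) ((hXq.const_mul _).const_mul _)
          (fun ω _ => ?_) (fun ω hω => ?_)
        · have hpow : (2 * Real.exp (T * |ω|)) ^ q = 2 ^ q * Real.exp (q * T * |ω|) := by
            rw [mul_pow, ← Real.exp_nat_mul, mul_assoc]
          have := norm_mul_mul_sub_pow_le (hV ω) (hK ω) (X ω) q
          rwa [hpow, mul_assoc (2 ^ q)] at this
        · exact norm_mul_mul_sub_pow_le (hVε ω (not_lt.1 hω)) (hK ω) (X ω) q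
    _ ≤ _ := by
        have hcompl : ∫ ω in {ω | Ω < |ω|}ᶜ, ‖X ω‖ ^ q ≤ ∫ ω, ‖X ω‖ ^ q :=
          setIntegral_le_integral hXq (.of_forall fun ω => by positivity)
        simp only [integral_const_mul]
        linarith [mul_le_mul_of_nonneg_left hcompl (by positivity : 0 ≤ B ^ q * ε ^ q)]

lemma exists_pos_pow_le {q : ℕ} (hq : q ≠ 0) {η : ℝ} (hη : 0 < η) : ∃ ε > 0, ε ^ q ≤ η :=
  ⟨min 1 η, lt_min one_pos hη,
    (pow_le_of_le_one (by positivity) (min_le_left _ _) hq).trans (min_le_right _ _)⟩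

/-- Uniform version: for q ∈ {1,2}, T > 0, K ∈ L∞, and a family U of X ∈ L_q with
‖X‖_{L_q} ≤ 1 and uniformly vanishing weighted tails, for every δ > 0 there is a
single γ > 0 with ‖V_γKX − KX‖^q_{L_q} ≤ δ for all X ∈ U. -/
theorem stmt15 (q : ℕ) (hq : q = 1 ∨ q = 2) (T : ℝ) (hT : 0 < T)
    (K : ℝ → ℂ) (hKmeas : Measurable K) (B : ℝ) (hK : ∀ ω : ℝ, norm (K ω) ≤ B)
    (U : Set (ℝ → ℂ))
    (hUmeas : ∀ X ∈ U, Measurable X)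
    (hUnorm : ∀ X ∈ U, (∫ ω : ℝ, (norm (X ω)) ^ q) ≤ 1)
    (hUint : ∀ X ∈ U,
      Integrable (fun ω : ℝ => Real.exp ((q : ℝ) * T * |ω|) * (norm (X ω)) ^ q))
    (hUtail : ∀ ε > (0 : ℝ), ∃ Ω : ℝ, 0 < Ω ∧ ∀ X ∈ U,
      (∫ ω in {ω : ℝ | Ω < |ω|}, Real.exp ((q : ℝ) * T * |ω|) * (norm (X ω)) ^ q) ≤ ε) :
    ∀ δ > (0 : ℝ), ∃ γ > (0 : ℝ), ∀ X ∈ U,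
      (∫ ω : ℝ,
        (norm (Complex.exp (-2 * (T : ℂ) * (Complex.I * ω) ^ 2 / ((γ : ℂ) + Complex.I * ω))
            * K ω * X ω - K ω * X ω)) ^ q) ≤ δ := by
  intro δ hδ
  have hq0 : q ≠ 0 := by rcases hq with rfl | rfl <;> norm_num
  have hB : 0 ≤ B := (norm_nonneg _).trans (hK 0)
  set η := δ / (2 * (2 * (B + 1)) ^ q)
  have hη : 0 < η := by positivity
  obtain ⟨ε, hε, hεη⟩ := exists_pos_pow_le hq0 hη
  obtain ⟨Ω, -, htail⟩ := hUtail η hη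
  obtain ⟨γ, hγ, hnear⟩ := exists_dampingMultiplier_near_one hT.le hε Ω
  refine ⟨γ, hγ, fun X hX => ?_⟩
  calc _ ≤ (B + 1) ^ q * (ε ^ q * (∫ ω, ‖X ω‖ ^ q) +
        2 ^ q * ∫ ω in {ω | Ω < |ω|}, Real.exp (q * T * |ω|) * ‖X ω‖ ^ q) :=
        integral_norm_mul_mul_sub_pow_le hT.le (continuous_dampingMultiplier hγ).measurable
          (norm_dampingMultiplier_sub_one_le hT.le hγ) hε.le hnear hKmeas
          (fun ω => (hK ω).trans (le_add_of_nonneg_right zero_le_one)) (hUmeas X hX) (hUint X hX)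
    _ ≤ (B + 1) ^ q * (η * 1 + 2 ^ q * η) := by
        gcongr
        exacts [hUnorm X hX, htail X hX]
    _ ≤ (B + 1) ^ q * (2 * 2 ^ q * η) := by
        have h2q : (1 : ℝ) ≤ 2 ^ q := one_le_pow₀ one_le_two
        gcongr
        nlinarith
    _ = δ := by
        simp only [η, mul_pow]
        field_simp
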